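/- arXiv:2202.00413 — 3 statements merged into one kernel-verified Lean document; each statement's English description precedes it below -/
import Mathlib

section
/- Let the edges of the complete graph K_k be added one at a time in some order (a bijection from edge set to {1,...,C(k,2)}). Then there exists a vertex v such that for at least (k-1)(k-2)/6 edges {w_i, w_j} (with w_i, w_j ≠ v), the edge {w_i, w_j} was added after both edges {v, w_i} and {v, w_j}. -/
open Finset

private lemma two_choose (n : ℕ) : 2 * n.choose 2 = n * (n - 1) := by
  induction n with
  | zero => rfl
  | succ m ih =>
    rw [Nat.choose_succ_succ, Nat.choose_one_right, Nat.mul_add, ih]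
    cases m with
    | zero => rfl
    | succ p => simp [Nat.succ_sub_one]; ring

private lemma six_choose (n : ℕ) : 6 * n.choose 3 = n * (n - 1) * (n - 2) := by
  induction n with
  | zero => rfl
  | succ m ih =>
    rw [Nat.choose_succ_succ, Nat.mul_add, ih]
    have h2 : 6 * m.choose 2 = 3 * (m * (m - 1)) := by
      rw [← two_choose m]; ring
    rw [h2]
    match m with
    | 0 => rfl
    | 1 => rfl
    | (p+2) => simp [Nat.succ_sub_one, Nat.add_sub_cancel]; ring

/-- `p = ⟨v, e⟩` is a "good" pair for triple `t`: `v ∈ t`, `e` is an edge inside `t`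
not containing `v`, and `e` is late for `v`. -/
private def Goodp {k : ℕ} (σ : Sym2 (Fin k) → ℕ) (t : Finset (Fin k))
    (p : Σ _ : Fin k, Sym2 (Fin k)) : Prop :=
  p.1 ∈ t ∧ (∀ w ∈ p.2, w ∈ t) ∧ ¬ p.2.IsDiag ∧ p.1 ∉ p.2 ∧ ∀ w ∈ p.2, σ s(p.1, w) < σ p.2

private lemma good_of {k : ℕ} (σ : Sym2 (Fin k) → ℕ) (v a b : Fin k) (t : Finset (Fin k))
    (hv : v ∈ t) (ha : a ∈ t) (hb : b ∈ t)
    (hva : v ≠ a) (hvb : v ≠ b) (hab : a ≠ b)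
    (h1 : σ s(v, a) < σ s(a, b)) (h2 : σ s(v, b) < σ s(a, b)) :
    Goodp σ t ⟨v, s(a, b)⟩ := by
  refine ⟨hv, ?_, ?_, ?_, ?_⟩
  · intro w hw; rw [Sym2.mem_iff] at hw; rcases hw with rfl | rfl <;> assumption
  · simp [Sym2.mk_isDiag_iff, hab]
  · simp [Sym2.mem_iff, hva, hvb]
  · intro w hw; rw [Sym2.mem_iff] at hw
    rcases hw with rfl | rfl
    · exact h1
    · exact h2

private lemma exists_good {k : ℕ} (σ : Sym2 (Fin k) → ℕ)
    (hinj : Set.InjOn σ {e : Sym2 (Fin k) | ¬ e.IsDiag})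
    (a b c : Fin k) (hab : a ≠ b) (hac : a ≠ c) (hbc : b ≠ c) :
    ∃ p, Goodp σ ({a, b, c} : Finset (Fin k)) p := by
  have nab : ¬ (s(a, b) : Sym2 (Fin k)).IsDiag := by simp [Sym2.mk_isDiag_iff, hab]
  have nac : ¬ (s(a, c) : Sym2 (Fin k)).IsDiag := by simp [Sym2.mk_isDiag_iff, hac]
  have nbc : ¬ (s(b, c) : Sym2 (Fin k)).IsDiag := by simp [Sym2.mk_isDiag_iff, hbc]
  have e1 : (s(a, b) : Sym2 (Fin k)) ≠ s(a, c) := by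
    rw [Ne, Sym2.eq_iff]; rintro (⟨h1, h2⟩ | ⟨h1, h2⟩) <;> simp_all
  have e2 : (s(a, b) : Sym2 (Fin k)) ≠ s(b, c) := by
    rw [Ne, Sym2.eq_iff]; rintro (⟨h1, h2⟩ | ⟨h1, h2⟩) <;> simp_all
  have e3 : (s(a, c) : Sym2 (Fin k)) ≠ s(b, c) := by
    rw [Ne, Sym2.eq_iff]; rintro (⟨h1, h2⟩ | ⟨h1, h2⟩) <;> simp_all
  have d1 : σ s(a, b) ≠ σ s(a, c) := fun h => e1 (hinj nab nac h)
  have d2 : σ s(a, b) ≠ σ s(b, c) := fun h => e2 (hinj nab nbc h)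
  have d3 : σ s(a, c) ≠ σ s(b, c) := fun h => e3 (hinj nac nbc h)
  have hvmem : a ∈ ({a, b, c} : Finset (Fin k)) := by simp
  have hvmem2 : b ∈ ({a, b, c} : Finset (Fin k)) := by simp
  have hvmem3 : c ∈ ({a, b, c} : Finset (Fin k)) := by simp
  have sba : (s(b, a) : Sym2 (Fin k)) = s(a, b) := Sym2.eq_swap
  have sca : (s(c, a) : Sym2 (Fin k)) = s(a, c) := Sym2.eq_swap
  have scb : (s(c, b) : Sym2 (Fin k)) = s(b, c) := Sym2.eq_swap
  rcases lt_or_gt_of_ne d2 with hx2 | hx2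
  · -- σ s(a,b) < σ s(b,c)
    rcases lt_or_gt_of_ne d3 with hx3 | hx3
    · -- σ s(a,c) < σ s(b,c) : max is s(b,c), late for a
      exact ⟨⟨a, s(b, c)⟩, good_of σ a b c _ hvmem hvmem2 hvmem3 hab hac hbc hx2 hx3⟩
    · -- σ s(b,c) < σ s(a,c) : max is s(a,c), late for b
      refine ⟨⟨b, s(a, c)⟩, good_of σ b a c _ hvmem2 hvmem hvmem3 (Ne.symm hab) hbc hac ?_ ?_⟩
      · rw [sba]; omega
      · exact hx3
  · -- σ s(b,c) < σ s(a,b)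
    rcases lt_or_gt_of_ne d1 with hx1 | hx1
    · -- σ s(a,b) < σ s(a,c) : max is s(a,c), late for b
      refine ⟨⟨b, s(a, c)⟩, good_of σ b a c _ hvmem2 hvmem hvmem3 (Ne.symm hab) hbc hac ?_ ?_⟩
      · rw [sba]; exact hx1
      · exact lt_trans hx2 hx1
    · -- max is s(a,b), late for c
      refine ⟨⟨c, s(a, b)⟩, good_of σ c a b _ hvmem3 hvmem hvmem2 (Ne.symm hac) (Ne.symm hbc) hab ?_ ?_⟩
      · rw [sca]; exact hx1
      · rw [scb]; exact hx2

private lemma good_det {k : ℕ} (σ : Sym2 (Fin k) → ℕ) (p : Σ _ : Fin k, Sym2 (Fin k))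
    (t : Finset (Fin k)) (ht : t.card = 3) (h : Goodp σ t p) :
    ∀ w : Fin k, w ∈ t ↔ w = p.1 ∨ w ∈ p.2 := by
  obtain ⟨v, e⟩ := p
  induction e using Sym2.ind with
  | _ x y =>
    obtain ⟨hv, hsub, hdiag, hnot, -⟩ := h
    have hxy : x ≠ y := by simpa [Sym2.mk_isDiag_iff] using hdiag
    have hvx : v ≠ x := fun hh => hnot (by simp [hh])
    have hvy : v ≠ y := fun hh => hnot (by simp [hh])
    have hx : x ∈ t := hsub x (by simp)
    have hy : y ∈ t := hsub y (by simp)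
    have hsub' : ({v, x, y} : Finset (Fin k)) ⊆ t := by
      intro w hw; simp at hw; rcases hw with rfl | rfl | rfl <;> assumption
    have hc : ({v, x, y} : Finset (Fin k)).card = 3 := by
      rw [Finset.card_insert_of_notMem (by simp [hvx, hvy]),
        Finset.card_insert_of_notMem (by simp [hxy]), Finset.card_singleton]
    have := Finset.eq_of_subset_of_card_le hsub' (by omega)
    intro w
    rw [← this]
    simp [Sym2.mem_iff]

/-- In any ordering of the edges of `K_k` (a bijection from the edge set onto
`{1, ..., k(k-1)/2}`), there is a vertex `v` such that at least `(k-1)(k-2)/6` edges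
`{w_i, w_j}` not containing `v` were added after both `{v, w_i}` and `{v, w_j}`. -/
theorem stmt_0 (k : ℕ) (hk : 3 ≤ k) (σ : Sym2 (Fin k) → ℕ)
    (hσ : Set.BijOn σ {e : Sym2 (Fin k) | ¬ e.IsDiag} (Set.Icc 1 (k * (k - 1) / 2))) :
    ∃ v : Fin k,
      ((k : ℝ) - 1) * ((k : ℝ) - 2) / 6 ≤
        ({e : Sym2 (Fin k) | ¬ e.IsDiag ∧ v ∉ e ∧ ∀ w ∈ e, σ s(v, w) < σ e}.ncard : ℝ) := by
  classical
  have hinj : Set.InjOn σ {e : Sym2 (Fin k) | ¬ e.IsDiag} := hσ.injOn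
  set L : Fin k → Finset (Sym2 (Fin k)) := fun v =>
    univ.filter (fun e => ¬ e.IsDiag ∧ v ∉ e ∧ ∀ w ∈ e, σ s(v, w) < σ e) with hL
  -- the function from triples to good pairs
  have v0 : Fin k := ⟨0, by omega⟩
  set f : Finset (Fin k) → (Σ _ : Fin k, Sym2 (Fin k)) := fun t =>
    if h : ∃ p, Goodp σ t p then h.choose else ⟨v0, s(v0, v0)⟩ with hf
  have hgood : ∀ t ∈ powersetCard 3 (univ : Finset (Fin k)), Goodp σ t (f t) := by
    intro t ht
    rw [mem_powersetCard] at ht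
    obtain ⟨a, b, c, hab, hac, hbc, rfl⟩ := Finset.card_eq_three.1 ht.2
    have hex := exists_good σ hinj a b c hab hac hbc
    simp only [hf, dif_pos hex]
    exact hex.choose_spec
  have hsum : k.choose 3 ≤ ∑ v : Fin k, (L v).card := by
    have hcard : (powersetCard 3 (univ : Finset (Fin k))).card = k.choose 3 := by
      rw [card_powersetCard, card_univ, Fintype.card_fin]
    have hmaps : ∀ t ∈ powersetCard 3 (univ : Finset (Fin k)),
        f t ∈ (univ : Finset (Fin k)).sigma L := by
      intro t ht
      obtain ⟨-, -, h1, h2, h3⟩ := hgood t ht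
      rw [Finset.mem_sigma]
      exact ⟨mem_univ _, by simp only [hL, mem_filter]; exact ⟨mem_univ _, h1, h2, h3⟩⟩
    have hcle := Finset.card_le_card_of_injOn f hmaps ?_
    · rw [hcard] at hcle
      rwa [Finset.card_sigma] at hcle
    · intro t ht t' ht' heq
      rw [mem_coe, mem_powersetCard] at ht ht'
      have h1 := good_det σ (f t) t ht.2 (hgood t (by rw [mem_powersetCard]; exact ht))
      have h2 := good_det σ (f t') t' ht'.2 (hgood t' (by rw [mem_powersetCard]; exact ht'))
      ext w
      rw [h1 w, h2 w, heq]
  -- pigeonhole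
  have hk0 : (0 : ℝ) < (k : ℝ) := by positivity
  obtain ⟨v, hv⟩ : ∃ v : Fin k, ((k.choose 3 : ℝ) / k) ≤ ((L v).card : ℝ) := by
    by_contra hcon
    push_neg at hcon
    have hlt : ∑ v : Fin k, ((L v).card : ℝ) < ∑ _v : Fin k, ((k.choose 3 : ℝ) / k) :=
      Finset.sum_lt_sum_of_nonempty (univ_nonempty_iff.2 ⟨v0⟩) (fun v _ => hcon v)
    rw [Finset.sum_const, card_univ, Fintype.card_fin, nsmul_eq_mul,
      mul_div_cancel₀ _ (ne_of_gt hk0)] at hlt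
    have : (k.choose 3 : ℝ) ≤ ∑ v : Fin k, ((L v).card : ℝ) := by
      rw [← Nat.cast_sum]
      exact_mod_cast hsum
    linarith
  refine ⟨v, ?_⟩
  have hset : {e : Sym2 (Fin k) | ¬ e.IsDiag ∧ v ∉ e ∧ ∀ w ∈ e, σ s(v, w) < σ e} = ↑(L v) := by
    ext e; simp [hL]
  rw [hset, Set.ncard_coe_finset]
  refine le_trans ?_ hv
  rw [div_le_div_iff₀ (by norm_num) hk0] at *
  · have h6 : (6 : ℝ) * (k.choose 3 : ℝ) = (k : ℝ) * ((k : ℝ) - 1) * ((k : ℝ) - 2) := by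
      have := six_choose k
      have h1 : ((k - 1 : ℕ) : ℝ) = (k : ℝ) - 1 := by
        rw [Nat.cast_sub (by omega)]; norm_num
      have h2 : ((k - 2 : ℕ) : ℝ) = (k : ℝ) - 2 := by
        rw [Nat.cast_sub (by omega)]; norm_num
      calc (6 : ℝ) * (k.choose 3 : ℝ) = ((6 * k.choose 3 : ℕ) : ℝ) := by push_cast; ring
        _ = ((k * (k - 1) * (k - 2) : ℕ) : ℝ) := by rw [this]
        _ = (k : ℝ) * ((k : ℝ) - 1) * ((k : ℝ) - 2) := by push_cast [h1, h2]; ring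
    nlinarith [h6]
end

section
/- Let k ≥ 10^8 and let the edges of K_k be added one at a time in some order, giving graphs G_0 ⊆ ... ⊆ G_{C(k,2)}. Then there exists a vertex v such that for at least k^2/3 − k^2/(log k)^2 edges {w_i, w_j}, at the time just before the edge {w_i, w_j} was added, both w_i and w_j were already in the same connected component as v. -/
/-!
Call `(v, a, b)`, with `a ≠ b`, unjoined if just before the edge `ab` is added `v` does not
reach both `a` and `b`. Charge such a triple to the step at which `v` first reaches both. That
step adds an edge `xy` merging two components `A` and `B`, and the triples charged to it lie in
`A × B × B ∪ B × A × A ∪ (A ∪ B) × {(x, y), (y, x)}`, so there are at most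
`ab(a + b) + 2(a + b)` of them, while the potential `∑ᵥ |C(v)| (|C(v)| + 6)` grows by
`3ab(a + b) + 12ab`. The potential runs from `7k` to `k³ + 6k²`, so there are at most
`k³/3 + 2k²` unjoined triples. Averaging over `v`, some vertex has at least `2k²/3 - 3k`
joined ordered pairs, i.e. at least `k²/3 - 3k/2` joined edges, and `(log k)² ≤ 2k/3`
absorbs the `3k/2`.
-/

open Finset

namespace SimpleGraph

variable {V : Type*} {H : SimpleGraph V} {x y u w : V}

theorem reachable_sup_edge_iff :
    (H ⊔ edge x y).Reachable u w ↔ H.Reachable u w ∨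
      (H.Reachable u x ∧ H.Reachable y w) ∨ (H.Reachable u y ∧ H.Reachable x w) := by
  constructor
  · rintro ⟨p⟩
    induction p with
    | nil => exact .inl .rfl
    | @cons u v w huv _ ih =>
      rcases huv with huv | huv
      · have huv := huv.reachable
        rcases ih with h | ⟨h₁, h₂⟩ | ⟨h₁, h₂⟩
        exacts [.inl (huv.trans h), .inr (.inl ⟨huv.trans h₁, h₂⟩),
          .inr (.inr ⟨huv.trans h₁, h₂⟩)]
      · obtain ⟨⟨rfl, rfl⟩ | ⟨rfl, rfl⟩, -⟩ := (edge_adj ..).1 huv <;>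
          rcases ih with h | ⟨-, h⟩ | ⟨-, h⟩ <;> tauto
  · have hxy : (H ⊔ edge x y).Reachable x y := by
      rcases eq_or_ne x y with rfl | hne
      · rfl
      · exact Adj.reachable (.inr ((edge_adj ..).2 ⟨.inl ⟨rfl, rfl⟩, hne⟩))
    have hle : H ≤ H ⊔ edge x y := le_sup_left
    rintro (h | ⟨h₁, h₂⟩ | ⟨h₁, h₂⟩)
    · exact h.mono hle
    · exact ((h₁.mono hle).trans hxy).trans (h₂.mono hle)
    · exact ((h₁.mono hle).trans hxy.symm).trans (h₂.mono hle)

variable [Fintype V]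

open Classical in
noncomputable def componentFinset (H : SimpleGraph V) (v : V) : Finset V :=
  {w | H.Reachable v w}

@[simp]
theorem mem_componentFinset : w ∈ H.componentFinset u ↔ H.Reachable u w := by
  simp [componentFinset]

theorem componentFinset_eq_of_reachable (h : H.Reachable u w) :
    H.componentFinset u = H.componentFinset w := by
  ext z
  simp only [mem_componentFinset]
  exact ⟨h.symm.trans, h.trans⟩

theorem componentFinset_sup_edge_left [DecidableEq V] :
    (H ⊔ edge x y).componentFinset x = H.componentFinset x ∪ H.componentFinset y := by
  ext z
  simp only [mem_componentFinset, mem_union, reachable_sup_edge_iff]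
  constructor
  · rintro (h | ⟨-, h⟩ | ⟨-, h⟩)
    exacts [.inl h, .inr h, .inl h]
  · rintro (h | h)
    exacts [.inl h, .inr (.inl ⟨.rfl, h⟩)]

theorem componentFinset_sup_edge_of_mem [DecidableEq V]
    (hu : u ∈ H.componentFinset x ∪ H.componentFinset y) :
    (H ⊔ edge x y).componentFinset u = H.componentFinset x ∪ H.componentFinset y := by
  have hsup : H ≤ H ⊔ edge x y := le_sup_left
  have hxy : (H ⊔ edge x y).Reachable x y :=
    reachable_sup_edge_iff.2 (.inr (.inl ⟨.rfl, .rfl⟩))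
  rw [← componentFinset_sup_edge_left]
  rcases mem_union.1 hu with hu | hu
  · exact (componentFinset_eq_of_reachable ((mem_componentFinset.1 hu).mono hsup)).symm
  · exact (componentFinset_eq_of_reachable (hxy.trans ((mem_componentFinset.1 hu).mono hsup))).symm

theorem componentFinset_sup_edge_of_not_reachable (hx : ¬H.Reachable u x)
    (hy : ¬H.Reachable u y) : (H ⊔ edge x y).componentFinset u = H.componentFinset u := by
  ext z
  simp only [mem_componentFinset, reachable_sup_edge_iff]
  tauto

theorem componentFinset_bot [DecidableEq V] : (⊥ : SimpleGraph V).componentFinset u = {u} := by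
  ext; simp [reachable_bot, eq_comm]

theorem componentFinset_top : (⊤ : SimpleGraph V).componentFinset u = univ := by
  ext; simp

noncomputable def componentPotential (H : SimpleGraph V) : ℕ :=
  ∑ v, #(H.componentFinset v) * (#(H.componentFinset v) + 6)

theorem componentPotential_top :
    (⊤ : SimpleGraph V).componentPotential =
      Fintype.card V * (Fintype.card V * (Fintype.card V + 6)) := by
  simp [componentPotential, componentFinset_top]

open Classical in
noncomputable def newlyJoinedTriples (H H' : SimpleGraph V) : Finset (V × V × V) :=
  {p | H'.Adj p.2.1 p.2.2 ∧ ¬(H.Reachable p.1 p.2.1 ∧ H.Reachable p.1 p.2.2) ∧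
    H'.Reachable p.1 p.2.1 ∧ H'.Reachable p.1 p.2.2}

@[simp]
theorem mem_newlyJoinedTriples {H' : SimpleGraph V} {p : V × V × V} :
    p ∈ newlyJoinedTriples H H' ↔ H'.Adj p.2.1 p.2.2 ∧
      ¬(H.Reachable p.1 p.2.1 ∧ H.Reachable p.1 p.2.2) ∧
      H'.Reachable p.1 p.2.1 ∧ H'.Reachable p.1 p.2.2 := by
  simp [newlyJoinedTriples]

variable [DecidableEq V]

theorem componentPotential_bot : (⊥ : SimpleGraph V).componentPotential = 7 * Fintype.card V := by
  simp [componentPotential, componentFinset_bot, mul_comm]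

theorem componentPotential_sup_edge (hxy : ¬H.Reachable x y) :
    let a := #(H.componentFinset x)
    let b := #(H.componentFinset y)
    (H ⊔ edge x y).componentPotential + (a * (a * (a + 6)) + b * (b * (b + 6))) =
      H.componentPotential + (a + b) * ((a + b) * (a + b + 6)) := by
  intro a b
  set A := H.componentFinset x
  set B := H.componentFinset y
  have hdisj : Disjoint A B := Finset.disjoint_left.2 fun z hzA hzB =>
    hxy ((mem_componentFinset.1 hzA).trans (mem_componentFinset.1 hzB).symm)
  have hother : ∀ v ∉ A ∪ B, (H ⊔ edge x y).componentFinset v = H.componentFinset v := by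
    intro v hv
    simp only [mem_union, mem_componentFinset, not_or, A, B] at hv
    exact componentFinset_sup_edge_of_not_reachable (fun h => hv.1 h.symm) (fun h => hv.2 h.symm)
  have hold : ∀ v,
      (v ∈ A → H.componentFinset v = A) ∧ (v ∈ B → H.componentFinset v = B) :=
    fun v => ⟨fun hv => (componentFinset_eq_of_reachable (mem_componentFinset.1 hv)).symm,
      fun hv => (componentFinset_eq_of_reachable (mem_componentFinset.1 hv)).symm⟩
  have hrest : ∑ v ∈ (A ∪ B)ᶜ, #((H ⊔ edge x y).componentFinset v) *
      (#((H ⊔ edge x y).componentFinset v) + 6) =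
      ∑ v ∈ (A ∪ B)ᶜ, #(H.componentFinset v) * (#(H.componentFinset v) + 6) :=
    sum_congr rfl fun v hv => by rw [hother v (mem_compl.1 hv)]
  have hjoinedSum : ∑ v ∈ A ∪ B, #((H ⊔ edge x y).componentFinset v) *
      (#((H ⊔ edge x y).componentFinset v) + 6) = (a + b) * ((a + b) * (a + b + 6)) := by
    rw [sum_congr rfl fun v hv => by rw [componentFinset_sup_edge_of_mem hv], sum_const,
      smul_eq_mul, card_union_of_disjoint hdisj]
  have hsplitSum : ∑ v ∈ A ∪ B, #(H.componentFinset v) * (#(H.componentFinset v) + 6) =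
      a * (a * (a + 6)) + b * (b * (b + 6)) := by
    rw [sum_union hdisj, sum_congr rfl fun v hv => by rw [(hold v).1 hv],
      sum_congr (s₁ := B) rfl fun v hv => by rw [(hold v).2 hv], sum_const, sum_const,
      smul_eq_mul, smul_eq_mul]
  unfold componentPotential
  rw [← sum_add_sum_compl (A ∪ B), ← sum_add_sum_compl (A ∪ B) (fun v => _ * _), hrest,
    hjoinedSum, hsplitSum]
  ring

theorem newlyJoinedTriples_sup_edge_subset :
    newlyJoinedTriples H (H ⊔ edge x y) ⊆
      H.componentFinset x ×ˢ H.componentFinset y ×ˢ H.componentFinset y ∪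
        H.componentFinset y ×ˢ H.componentFinset x ×ˢ H.componentFinset x ∪
        (H.componentFinset x ∪ H.componentFinset y) ×ˢ {(x, y), (y, x)} := by
  rintro ⟨v, a, b⟩ hp
  simp only [mem_newlyJoinedTriples, sup_adj] at hp
  obtain ⟨hab | hab, hnot, hva, hvb⟩ := hp
  · have hna : ¬H.Reachable v a := fun h => hnot ⟨h, h.trans hab.reachable⟩
    simp only [mem_union, mem_product, mem_componentFinset]
    rcases reachable_sup_edge_iff.1 hva with h | ⟨h₁, h₂⟩ | ⟨h₁, h₂⟩
    · exact absurd h hna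
    · exact .inl (.inl ⟨h₁.symm, h₂, h₂.trans hab.reachable⟩)
    · exact .inl (.inr ⟨h₁.symm, h₂, h₂.trans hab.reachable⟩)
  · have hv : v ∈ (H ⊔ edge x y).componentFinset x ∧
        (a, b) ∈ ({(x, y), (y, x)} : Finset _) := by
      obtain ⟨⟨rfl, rfl⟩ | ⟨rfl, rfl⟩, -⟩ := (edge_adj ..).1 hab
      exacts [⟨mem_componentFinset.2 hva.symm, by simp⟩,
        ⟨mem_componentFinset.2 hvb.symm, by simp⟩]
    rw [componentFinset_sup_edge_left] at hv
    exact mem_union_right _ (mem_product.2 hv)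

theorem card_newlyJoinedTriples_sup_edge_le :
    let a := #(H.componentFinset x)
    let b := #(H.componentFinset y)
    (#(newlyJoinedTriples H (H ⊔ edge x y))) ≤ a * (b * b) + b * (a * a) + (a + b) * 2 := by
  intro a b
  refine (card_le_card newlyJoinedTriples_sup_edge_subset).trans <|
    (card_union_le _ _).trans <| add_le_add ((card_union_le _ _).trans_eq ?_) ?_
  · simp only [card_product, a, b]
  · rw [card_product]
    exact Nat.mul_le_mul (card_union_le _ _) card_le_two

theorem componentPotential_add_card_newlyJoinedTriples_le (x y : V) :
    H.componentPotential + 3 * #(newlyJoinedTriples H (H ⊔ edge x y)) ≤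
      (H ⊔ edge x y).componentPotential := by
  by_cases hxy : H.Reachable x y
  · have hsame : ∀ u w, (H ⊔ edge x y).Reachable u w ↔ H.Reachable u w := fun u w => by
      refine reachable_sup_edge_iff.trans ⟨?_, .inl⟩
      rintro (h | ⟨h₁, h₂⟩ | ⟨h₁, h₂⟩)
      exacts [h, h₁.trans (hxy.trans h₂), h₁.trans (hxy.symm.trans h₂)]
    have hempty : newlyJoinedTriples H (H ⊔ edge x y) = ∅ := eq_empty_of_forall_notMem
      fun p hp => (mem_newlyJoinedTriples.1 hp).2.1
        ⟨(hsame _ _).1 (mem_newlyJoinedTriples.1 hp).2.2.1,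
          (hsame _ _).1 (mem_newlyJoinedTriples.1 hp).2.2.2⟩
    have hcomp : (H ⊔ edge x y).componentFinset = H.componentFinset := by
      ext u w; simp only [mem_componentFinset, hsame]
    simp [hempty, componentPotential, hcomp]
  · have hpot := componentPotential_sup_edge hxy
    have hcard := card_newlyJoinedTriples_sup_edge_le (H := H) (x := x) (y := y)
    set a := #(H.componentFinset x)
    set b := #(H.componentFinset y)
    have ha : 1 ≤ a := card_pos.2 ⟨x, mem_componentFinset.2 .rfl⟩
    have hb : 1 ≤ b := card_pos.2 ⟨y, mem_componentFinset.2 .rfl⟩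
    nlinarith [Nat.mul_le_mul ha hb]

end SimpleGraph

theorem add_sum_range_le_of_add_le_succ {f g : ℕ → ℕ} {n : ℕ}
    (h : ∀ t < n, f t + g t ≤ f (t + 1)) : f 0 + ∑ t ∈ range n, g t ≤ f n := by
  induction n with
  | zero => simp
  | succ n ih =>
    have hprev := ih fun t ht => h t (by omega)
    have hlast := h n n.lt_succ_self
    rw [sum_range_succ]
    omega

open Classical in
theorem card_filter_sym2Mk_mem_le {α : Type*} [Fintype α] (S : Set (Sym2 α)) :
    #{q : α × α | s(q.1, q.2) ∈ S} ≤ 2 * S.ncard := by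
  have hfiber :
      ∀ e ∈ ({q : α × α | s(q.1, q.2) ∈ S} : Finset _).image (fun q => s(q.1, q.2)),
      #{q ∈ ({q : α × α | s(q.1, q.2) ∈ S} : Finset _) | s(q.1, q.2) = e} ≤ 2 := by
    simp only [mem_image]
    rintro _ ⟨⟨a, b⟩, -, rfl⟩
    refine (card_le_card fun q hq => ?_).trans (card_le_two (a := (a, b)) (b := (b, a)))
    obtain ⟨c, d⟩ := q
    have := Sym2.eq_iff.1 (mem_filter.1 hq).2
    simp only [mem_insert, mem_singleton, Prod.mk.injEq]
    tauto
  refine (card_le_mul_card_image _ 2 hfiber).trans (Nat.mul_le_mul_left 2 ?_)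
  rw [Set.ncard_eq_toFinset_card' S]
  exact card_le_card fun e he => by
    obtain ⟨q, hq, rfl⟩ := mem_image.1 he
    simpa using hq

open SimpleGraph

section EdgeOrder

variable {V : Type*} {σ : Sym2 V → ℕ} {N : ℕ}

def edgeOrderGraph (σ : Sym2 V → ℕ) (t : ℕ) : SimpleGraph V :=
  fromEdgeSet {e | σ e ≤ t}

theorem edgeOrderGraph_adj {t : ℕ} {a b : V} :
    (edgeOrderGraph σ t).Adj a b ↔ σ s(a, b) ≤ t ∧ a ≠ b :=
  fromEdgeSet_adj _

def joinedEdges (σ : Sym2 V → ℕ) (v : V) : Set (Sym2 V) :=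
  {e | ¬e.IsDiag ∧ ∀ w ∈ e, (edgeOrderGraph σ (σ e - 1)).Reachable v w}

open Classical in
noncomputable def unjoinedTriples [Fintype V] (σ : Sym2 V → ℕ) : Finset (V × V × V) :=
  {p | p.2.1 ≠ p.2.2 ∧ s(p.2.1, p.2.2) ∉ joinedEdges σ p.1}

theorem mk_mem_joinedEdges {v a b : V} :
    s(a, b) ∈ joinedEdges σ v ↔ a ≠ b ∧
      (edgeOrderGraph σ (σ s(a, b) - 1)).Reachable v a ∧
      (edgeOrderGraph σ (σ s(a, b) - 1)).Reachable v b := by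
  simp [joinedEdges]

@[simp]
theorem mem_unjoinedTriples [Fintype V] {p : V × V × V} :
    p ∈ unjoinedTriples σ ↔ p.2.1 ≠ p.2.2 ∧ s(p.2.1, p.2.2) ∉ joinedEdges σ p.1 := by
  simp [unjoinedTriples]

variable (hσ : Set.BijOn σ {e : Sym2 V | ¬e.IsDiag} (Set.Icc 1 N))
include hσ

theorem edgeOrderGraph_zero : edgeOrderGraph σ 0 = ⊥ := by
  ext a b
  simp only [edgeOrderGraph_adj, bot_adj, iff_false, not_and]
  intro h hab
  have := (hσ.mapsTo (show s(a, b) ∈ {e : Sym2 V | ¬e.IsDiag} by simpa using hab)).1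
  omega

theorem edgeOrderGraph_eq_top {t : ℕ} (ht : N ≤ t) : edgeOrderGraph σ t = ⊤ := by
  ext a b
  simp only [edgeOrderGraph_adj, top_adj, and_iff_right_iff_imp]
  intro hab
  exact (hσ.mapsTo (show s(a, b) ∈ {e : Sym2 V | ¬e.IsDiag} by simpa using hab)).2.trans ht

theorem exists_edgeOrderGraph_succ_eq_sup_edge {t : ℕ} (ht : t < N) :
    ∃ x y, edgeOrderGraph σ (t + 1) = edgeOrderGraph σ t ⊔ edge x y := by
  obtain ⟨e, he, hσe⟩ := hσ.surjOn (Set.mem_Icc.2 ⟨by omega, ht⟩ : t + 1 ∈ Set.Icc 1 N)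
  induction e using Sym2.ind with | _ x y => ?_
  have hxy : x ≠ y := by simpa using he
  refine ⟨x, y, ?_⟩
  ext a b
  simp only [sup_adj, edgeOrderGraph_adj, edge_adj]
  by_cases hab : s(a, b) = s(x, y)
  · have := Sym2.eq_iff.1 hab
    rw [hab, hσe]
    tauto
  · have hnot : ¬(a = x ∧ b = y ∨ a = y ∧ b = x) := fun h => hab (Sym2.eq_iff.2 h)
    rcases eq_or_ne a b with rfl | hne
    · simp
    · have : σ s(a, b) ≠ t + 1 := fun h =>
        hab (hσ.injOn (by simpa using hne) (by simpa using hxy) (h.trans hσe.symm))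
      simp only [hnot, false_and, or_false, and_congr_left_iff]
      omega

theorem unjoinedTriples_subset_biUnion [Fintype V] [DecidableEq V] :
    unjoinedTriples σ ⊆ (range N).biUnion fun t =>
      newlyJoinedTriples (edgeOrderGraph σ t) (edgeOrderGraph σ (t + 1)) := by
  rintro ⟨v, a, b⟩ hp
  simp only [mem_unjoinedTriples, mk_mem_joinedEdges, not_and] at hp
  obtain ⟨hab, hnot⟩ := hp
  set s := σ s(a, b) - 1
  let P n := (edgeOrderGraph σ (s + n)).Reachable v a ∧ (edgeOrderGraph σ (s + n)).Reachable v b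
  have hP : ∀ n, N ≤ s + n → P n := fun n hn => by
    simp only [P, edgeOrderGraph_eq_top hσ hn, reachable_top, and_self]
  obtain ⟨n, hn, hn'⟩ := Nat.exists_not_and_succ_of_not_zero_of_exists (p := P)
    (by simpa [P] using hnot hab) ⟨N, hP N (by omega)⟩
  have hlt : s + n < N := by
    by_contra! h
    exact hn (hP n h)
  simp only [mem_biUnion, mem_range, mem_newlyJoinedTriples, edgeOrderGraph_adj]
  exact ⟨s + n, hlt, ⟨by omega, hab⟩, hn, hn'⟩

theorem card_unjoinedTriples_le [Fintype V] [DecidableEq V] :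
    7 * Fintype.card V + 3 * #(unjoinedTriples σ) ≤
      Fintype.card V * (Fintype.card V * (Fintype.card V + 6)) := by
  have htelescope := add_sum_range_le_of_add_le_succ
    (f := fun t => (edgeOrderGraph σ t).componentPotential)
    (g := fun t => 3 * #(newlyJoinedTriples (edgeOrderGraph σ t) (edgeOrderGraph σ (t + 1))))
    (n := N) fun t ht => by
      obtain ⟨x, y, hxy⟩ := exists_edgeOrderGraph_succ_eq_sup_edge hσ ht
      simpa only [hxy] using componentPotential_add_card_newlyJoinedTriples_le x y
  simp only [edgeOrderGraph_zero hσ, edgeOrderGraph_eq_top hσ le_rfl, componentPotential_bot,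
    componentPotential_top, ← mul_sum] at htelescope
  have hcard := (card_le_card (unjoinedTriples_subset_biUnion hσ)).trans card_biUnion_le
  omega

theorem exists_card_joinedEdges_ge [Fintype V] [DecidableEq V] [Nonempty V] :
    ∃ v, 2 * Fintype.card V ^ 2 + 7 ≤ 6 * (joinedEdges σ v).ncard + 9 * Fintype.card V := by
  classical
  set n := Fintype.card V
  let c v := #{q : V × V | s(q.1, q.2) ∈ joinedEdges σ v}
  let u v := #{q : V × V | q.1 ≠ q.2 ∧ s(q.1, q.2) ∉ joinedEdges σ v}
  have hsplit : ∀ v, c v + u v = n * n - n := fun v => by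
    have hoff : n * n - n = #(univ.offDiag : Finset (V × V)) := by simp [offDiag_card, n]
    rw [hoff, ← card_union_of_disjoint (disjoint_filter.2 fun _ _ h h' => h'.2 h)]
    congr 1
    ext ⟨a, b⟩
    simp only [mem_union, mem_filter, mem_univ, true_and, mem_offDiag, mk_mem_joinedEdges]
    tauto
  have hfiber : #(unjoinedTriples σ) = ∑ v, u v := by
    simp only [unjoinedTriples, u, card_filter]
    convert Fintype.sum_prod_type _
  obtain ⟨v, -, hv⟩ := exists_max_image univ c univ_nonempty
  have hmax : ∑ w, c w ≤ n * c v := by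
    simpa using sum_le_card_nsmul univ c (c v) fun w _ => hv w (mem_univ w)
  have htotal : n * (n * n - n) ≤ n * c v + #(unjoinedTriples σ) := by
    have : ∑ w, (c w + u w) = n * (n * n - n) := by
      simp only [hsplit, sum_const, card_univ, smul_eq_mul, n]
    rw [← this, sum_add_distrib, hfiber]
    omega
  have hbound := card_unjoinedTriples_le hσ
  have hc : c v ≤ 2 * (joinedEdges σ v).ncard := card_filter_sym2Mk_mem_le _
  have hpos : 0 < n := Fintype.card_pos
  refine ⟨v, ?_⟩
  suffices h : n * (2 * n ^ 2 + 7) ≤ n * (3 * c v + 9 * n) by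
    have := Nat.le_of_mul_le_mul_left h hpos
    omega
  obtain ⟨m, hm⟩ : ∃ m, n * n = m + n :=
    ⟨n * n - n, (Nat.sub_add_cancel (Nat.le_mul_self n)).symm⟩
  rw [hm, Nat.add_sub_cancel] at htotal
  nlinarith

end EdgeOrder

theorem Real.log_sq_le_two_div_three_mul {x : ℝ} (hx : 576 ≤ x) :
    Real.log x ^ 2 ≤ 2 / 3 * x := by
  have hx0 : 0 ≤ x := by linarith
  have hlog : Real.log x ≤ 4 * √(√x) := by
    have h := Real.log_le_rpow_div hx0 (by norm_num : (0 : ℝ) < 1 / 4)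
    rw [Real.sqrt_eq_rpow, Real.sqrt_eq_rpow, ← Real.rpow_mul hx0]
    norm_num at h ⊢
    linarith
  have hlog0 : 0 ≤ Real.log x := Real.log_nonneg (by linarith)
  have h24 : 24 ≤ √x := Real.le_sqrt_of_sq_le (by norm_num; linarith)
  calc Real.log x ^ 2 ≤ (4 * √(√x)) ^ 2 := pow_le_pow_left₀ hlog0 hlog 2
    _ = 16 * √x := by rw [mul_pow, Real.sq_sqrt (Real.sqrt_nonneg x)]; norm_num
    _ ≤ 2 / 3 * (√x * √x) := by nlinarith
    _ = 2 / 3 * x := by rw [Real.mul_self_sqrt hx0]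

/-- For `k ≥ 10^8` and any ordering of the edges of `K_k` (with `G t` the
graph of edges `e` with `σ e ≤ t`), there is a vertex `v` such that for at least
`k^2/3 - k^2/(log k)^2` edges `{w_i, w_j}`, just before that edge was added both `w_i`
and `w_j` were already in the connected component of `v`. -/
theorem stmt_4 (k : ℕ) (hk : 10 ^ 8 ≤ k) (σ : Sym2 (Fin k) → ℕ)
    (hσ : Set.BijOn σ {e : Sym2 (Fin k) | ¬ e.IsDiag} (Set.Icc 1 (k * (k - 1) / 2)))
    (G : ℕ → SimpleGraph (Fin k))
    (hG : ∀ t, G t = SimpleGraph.fromEdgeSet {e : Sym2 (Fin k) | σ e ≤ t}) :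
    ∃ v : Fin k,
      (k : ℝ) ^ 2 / 3 - (k : ℝ) ^ 2 / (Real.log k) ^ 2 ≤
        ({e : Sym2 (Fin k) | ¬ e.IsDiag ∧
            ∀ w ∈ e, (G (σ e - 1)).Reachable v w}.ncard : ℝ) := by
  obtain rfl : G = edgeOrderGraph σ := funext hG
  have : NeZero k := ⟨by omega⟩
  obtain ⟨v, hv⟩ := exists_card_joinedEdges_ge hσ
  rw [Fintype.card_fin] at hv
  refine ⟨v, ?_⟩
  have hk' : (576 : ℝ) ≤ k := by exact_mod_cast le_trans (by norm_num) hk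
  have hlog : 0 < Real.log k := Real.log_pos (by linarith)
  have hfrac : 3 / 2 * (k : ℝ) ≤ (k : ℝ) ^ 2 / Real.log k ^ 2 := by
    rw [le_div_iff₀ (by positivity)]
    nlinarith [Real.log_sq_le_two_div_three_mul hk']
  have hv' : 2 * (k : ℝ) ^ 2 + 7 ≤ 6 * (joinedEdges σ v).ncard + 9 * k := by exact_mod_cast hv
  change _ ≤ ((joinedEdges σ v).ncard : ℝ)
  linarith
end

section
/- In the unbiased Waiter-Client game on the edges of K_n, for every l ≥ 2, given any set S of 2^l − 1 vertices of an initially empty board, Waiter has a strategy that within at most 2^l rounds forces a red clique (a clique in Client's graph) on l vertices w_1, ..., w_l contained in S, with w_1 equal to a prescribed vertex v_1 ∈ S, and such that every edge claimed so far (by either player) has at least one endpoint among {w_1, ..., w_l}. -/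
/-- A history of an unbiased Waiter-Client game on `E(K_n)`: the list of rounds played so
far, each recording the pair of offered edges and Client's choice (`true` = first edge
goes to Client's red graph, the other to Waiter's blue graph). -/
abbrev WCHist (n : ℕ) := List (Sym2 (Fin n) × Sym2 (Fin n) × Bool)

/-- The set of edges claimed (by either player) during a history. -/
def wcClaimed {n : ℕ} (h : WCHist n) : Set (Sym2 (Fin n)) :=
  {e | ∃ x ∈ h, e = x.1 ∨ e = x.2.1}

/-- The set of edges in Client's (red) graph after a history. -/
def wcRed {n : ℕ} (h : WCHist n) : Set (Sym2 (Fin n)) :=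
  {e | ∃ x ∈ h, (x.2.2 = true ∧ e = x.1) ∨ (x.2.2 = false ∧ e = x.2.1)}

/-- The history after `r` rounds when Waiter uses strategy `ws` (mapping the current
history to the offered pair of edges) and Client plays `cl` (mapping the current history
to his choice). -/
def wcPlay {n : ℕ} (ws : WCHist n → Sym2 (Fin n) × Sym2 (Fin n))
    (cl : WCHist n → Bool) : ℕ → WCHist n
  | 0 => []
  | r + 1 =>
    let h := wcPlay ws cl r
    h ++ [((ws h).1, (ws h).2, cl h)]

/-! Waiter grows the clique one vertex at a time. Given a centre `w` and `2m` further candidates,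
she offers the `m` pairs of edges from `w` to two fresh candidates; the red endpoints are `m`
candidates all joined to `w` in red, and with `m = 2^l - 1` she recurses on them at level `l`.
Every edge offered in a phase contains its centre, and all later edges avoid that centre, so no
offer is ever an edge claimed before, and every claimed edge meets the clique of centres. -/

open Function Set

variable {n : ℕ}

section Play

variable (ws : WCHist n → Sym2 (Fin n) × Sym2 (Fin n)) (cl : WCHist n → Bool)

def wcRound (k : ℕ) : Sym2 (Fin n) × Sym2 (Fin n) × Bool :=
  ((ws (wcPlay ws cl k)).1, (ws (wcPlay ws cl k)).2, cl (wcPlay ws cl k))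

lemma wcPlay_succ (r : ℕ) : wcPlay ws cl (r + 1) = wcPlay ws cl r ++ [wcRound ws cl r] := rfl

lemma wcPlay_eq_map_range (r : ℕ) : wcPlay ws cl r = (List.range r).map (wcRound ws cl) := by
  induction r with
  | zero => rfl
  | succ r ih => rw [wcPlay_succ, List.range_succ, List.map_append, ← ih]; rfl

lemma length_wcPlay (r : ℕ) : (wcPlay ws cl r).length = r := by
  simp [wcPlay_eq_map_range]

lemma getElem?_wcPlay {k r : ℕ} (hk : k < r) :
    (wcPlay ws cl r)[k]? = some (wcRound ws cl k) := by
  simp [wcPlay_eq_map_range, hk]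

lemma mem_wcClaimed_wcPlay {r : ℕ} {e : Sym2 (Fin n)} :
    e ∈ wcClaimed (wcPlay ws cl r) ↔
      ∃ k < r, e = (ws (wcPlay ws cl k)).1 ∨ e = (ws (wcPlay ws cl k)).2 := by
  simp [wcClaimed, wcPlay_eq_map_range, wcRound]

lemma wcPlay_add {ws' : WCHist n → Sym2 (Fin n) × Sym2 (Fin n)} {m : ℕ}
    (hws : ∀ h, ws (wcPlay ws cl m ++ h) = ws' h) (t : ℕ) :
    wcPlay ws cl (m + t) = wcPlay ws cl m ++ wcPlay ws' (fun h => cl (wcPlay ws cl m ++ h)) t := by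
  induction t with
  | zero => simp [wcPlay]
  | succ t ih =>
    rw [← add_assoc, wcPlay_succ, wcPlay_succ, wcRound, wcRound, ih, hws, List.append_assoc]

end Play

lemma wcClaimed_append (h h' : WCHist n) : wcClaimed (h ++ h') = wcClaimed h ∪ wcClaimed h' := by
  ext; simp [wcClaimed, or_and_right, exists_or]

lemma wcRed_append (h h' : WCHist n) : wcRed (h ++ h') = wcRed h ∪ wcRed h' := by
  ext; simp [wcRed, or_and_right, exists_or]

def IsLegalOffer (h : WCHist n) (p : Sym2 (Fin n) × Sym2 (Fin n)) : Prop :=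
  p.1 ≠ p.2 ∧ ¬ p.1.IsDiag ∧ ¬ p.2.IsDiag ∧ p.1 ∉ wcClaimed h ∧ p.2 ∉ wcClaimed h

lemma IsLegalOffer.append_left {h h' : WCHist n} {p : Sym2 (Fin n) × Sym2 (Fin n)}
    (hp : IsLegalOffer h' p) (h1 : p.1 ∉ wcClaimed h) (h2 : p.2 ∉ wcClaimed h) :
    IsLegalOffer (h ++ h') p := by
  obtain ⟨hne, hd1, hd2, hc1, hc2⟩ := hp
  simp only [IsLegalOffer, wcClaimed_append, mem_union, not_or]
  exact ⟨hne, hd1, hd2, ⟨h1, hc1⟩, h2, hc2⟩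

def redLeaf (L : ℕ → Fin n) (h : WCHist n) (k : ℕ) : Fin n :=
  if h[k]?.any (·.2.2) then L (2 * k + 1) else L (2 * k + 2)

/-- Waiter's strategy for a red `K_l` on the candidates `L 0, …, L (2^l - 2)`, with `L 0` playing
the role of `w_1`: in round `k` she offers the edges from `L 0` to `L (2k+1)` and `L (2k+2)`,
then recurses on the red endpoints `redLeaf L`. Reading Client's choices through `h.take` makes
the continuation literally `waiterStrategy l L'` for one fixed `L'`. The level-`0` offer is never
made. -/
def waiterStrategy : ℕ → (ℕ → Fin n) → WCHist n → Sym2 (Fin n) × Sym2 (Fin n)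
  | 0, L, _ => (s(L 0, L 0), s(L 0, L 0))
  | l + 1, L, h =>
    if h.length < 2 ^ l - 1 then (s(L 0, L (2 * h.length + 1)), s(L 0, L (2 * h.length + 2)))
    else waiterStrategy l (redLeaf L (h.take (2 ^ l - 1))) (h.drop (2 ^ l - 1))

def waiterRounds (l : ℕ) : ℕ := ∑ j ∈ Finset.range l, (2 ^ j - 1)

lemma waiterRounds_succ (l : ℕ) : waiterRounds (l + 1) = 2 ^ l - 1 + waiterRounds l := by
  rw [waiterRounds, Finset.sum_range_succ, add_comm, ← waiterRounds]

lemma waiterRounds_lt_two_pow (l : ℕ) : waiterRounds l < 2 ^ l := by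
  induction l with
  | zero => simp [waiterRounds]
  | succ l ih =>
    rw [waiterRounds_succ, pow_succ]
    omega

lemma redLeaf_eq_or (L : ℕ → Fin n) (h : WCHist n) (k : ℕ) :
    redLeaf L h k = L (2 * k + 1) ∨ redLeaf L h k = L (2 * k + 2) := by
  unfold redLeaf
  split <;> simp

section RedLeaf

variable {L : ℕ → Fin n} {m : ℕ} (h : WCHist n)

lemma injOn_redLeaf (hL : InjOn L (Iio (2 * m + 1))) : InjOn (redLeaf L h) (Iio m) := by
  intro i hi j hj hij
  simp only [mem_Iio] at hi hj
  rcases redLeaf_eq_or L h i with hi' | hi' <;> rcases redLeaf_eq_or L h j with hj' | hj' <;>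
    have := hL (by simp; omega) (by simp; omega) (hi'.symm.trans (hij.trans hj')) <;> omega

lemma redLeaf_image_subset : redLeaf L h '' Iio m ⊆ L '' Iio (2 * m + 1) := by
  rintro _ ⟨k, hk, rfl⟩
  simp only [mem_Iio] at hk
  rcases redLeaf_eq_or L h k with e | e <;> exact ⟨_, by simp; omega, e.symm⟩

lemma apply_zero_notMem_redLeaf_image (hL : InjOn L (Iio (2 * m + 1))) :
    L 0 ∉ redLeaf L h '' Iio m := by
  rintro ⟨k, hk, e⟩
  simp only [mem_Iio] at hk
  rcases redLeaf_eq_or L h k with e' | e' <;>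
    have := hL (by simp; omega) (by simp) (e'.symm.trans e) <;> omega

end RedLeaf

lemma two_pow_succ_sub_one (l : ℕ) : 2 ^ (l + 1) - 1 = 2 * (2 ^ l - 1) + 1 := by
  have := Nat.one_le_two_pow (n := l)
  rw [pow_succ]
  omega

section StarPhase

variable (l : ℕ) (L : ℕ → Fin n) (cl : WCHist n → Bool)

lemma waiterStrategy_wcPlay_of_lt {k : ℕ} (hk : k < 2 ^ l - 1) :
    waiterStrategy (l + 1) L (wcPlay (waiterStrategy (l + 1) L) cl k) =
      (s(L 0, L (2 * k + 1)), s(L 0, L (2 * k + 2))) := by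
  simp [waiterStrategy, length_wcPlay, hk]

lemma waiterStrategy_succ_append {H : WCHist n} (hH : H.length = 2 ^ l - 1) (h : WCHist n) :
    waiterStrategy (l + 1) L (H ++ h) = waiterStrategy l (redLeaf L H) h := by
  simp [waiterStrategy, hH, List.take_left' hH, List.drop_left' hH]

lemma wcPlay_waiterStrategy_succ (t : ℕ) :
    wcPlay (waiterStrategy (l + 1) L) cl (2 ^ l - 1 + t) =
      wcPlay (waiterStrategy (l + 1) L) cl (2 ^ l - 1) ++
        wcPlay (waiterStrategy l (redLeaf L (wcPlay (waiterStrategy (l + 1) L) cl (2 ^ l - 1))))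
          (fun h => cl (wcPlay (waiterStrategy (l + 1) L) cl (2 ^ l - 1) ++ h)) t :=
  wcPlay_add _ _ (waiterStrategy_succ_append l L (length_wcPlay _ _ _)) t

lemma isLegalOffer_waiterStrategy_of_lt (hL : InjOn L (Iio (2 ^ (l + 1) - 1))) {k : ℕ}
    (hk : k < 2 ^ l - 1) :
    IsLegalOffer (wcPlay (waiterStrategy (l + 1) L) cl k)
      (waiterStrategy (l + 1) L (wcPlay (waiterStrategy (l + 1) L) cl k)) := by
  rw [two_pow_succ_sub_one] at hL
  have leaf_inj : ∀ {i j}, i < 2 * (2 ^ l - 1) + 1 → j < 2 * (2 ^ l - 1) + 1 →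
      s(L 0, L i) = s(L 0, L j) → i = j :=
    fun hi hj e => hL hi hj (Sym2.congr_right.1 e)
  have not_diag : ∀ {i}, i < 2 * (2 ^ l - 1) + 1 → 0 < i → ¬ s(L 0, L i).IsDiag :=
    fun hi hi0 e => hi0.ne (hL (by simp) hi (Sym2.mk_isDiag_iff.1 e))
  simp only [IsLegalOffer, mem_wcClaimed_wcPlay, waiterStrategy_wcPlay_of_lt l L cl hk]
  refine ⟨fun e => ?_, not_diag (by omega) (by omega), not_diag (by omega) (by omega), ?_, ?_⟩
  · have := leaf_inj (by omega) (by omega) e; omega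
  all_goals
    rintro ⟨j, hj, e | e⟩ <;>
      rw [waiterStrategy_wcPlay_of_lt l L cl (by omega)] at e <;>
      have := leaf_inj (by omega) (by omega) e <;> omega

lemma apply_zero_mem_of_mem_wcClaimed_waiterStrategy {e : Sym2 (Fin n)}
    (he : e ∈ wcClaimed (wcPlay (waiterStrategy (l + 1) L) cl (2 ^ l - 1))) : L 0 ∈ e := by
  obtain ⟨k, hk, rfl | rfl⟩ := (mem_wcClaimed_wcPlay _ _).1 he <;>
    simp [waiterStrategy_wcPlay_of_lt l L cl hk]

lemma mk_redLeaf_mem_wcRed_waiterStrategy {k : ℕ} (hk : k < 2 ^ l - 1) :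
    s(L 0, redLeaf L (wcPlay (waiterStrategy (l + 1) L) cl (2 ^ l - 1)) k) ∈
      wcRed (wcPlay (waiterStrategy (l + 1) L) cl (2 ^ l - 1)) := by
  have hround := getElem?_wcPlay (waiterStrategy (l + 1) L) cl hk
  refine ⟨_, List.mem_of_getElem? hround, ?_⟩
  simp only [redLeaf, hround, Option.any_some, wcRound, waiterStrategy_wcPlay_of_lt l L cl hk]
  cases cl (wcPlay (waiterStrategy (l + 1) L) cl k) <;> simp

end StarPhase

theorem waiterStrategy_legal (l : ℕ) (L : ℕ → Fin n) (hL : InjOn L (Iio (2 ^ l - 1)))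
    (cl : WCHist n → Bool) {k : ℕ} (hk : k < waiterRounds l) :
    IsLegalOffer (wcPlay (waiterStrategy l L) cl k)
        (waiterStrategy l L (wcPlay (waiterStrategy l L) cl k)) ∧
      ∀ a, a ∈ (waiterStrategy l L (wcPlay (waiterStrategy l L) cl k)).1 ∨
        a ∈ (waiterStrategy l L (wcPlay (waiterStrategy l L) cl k)).2 →
          a ∈ L '' Iio (2 ^ l - 1) := by
  induction l generalizing L cl k with
  | zero => simp [waiterRounds] at hk
  | succ l ih =>
    rw [waiterRounds_succ] at hk
    rw [two_pow_succ_sub_one] at hL ⊢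
    rcases lt_or_ge k (2 ^ l - 1) with hk' | hk'
    · refine ⟨isLegalOffer_waiterStrategy_of_lt l L cl (by rwa [two_pow_succ_sub_one]) hk', ?_⟩
      rw [waiterStrategy_wcPlay_of_lt l L cl hk']
      simp only [Sym2.mem_iff]
      rintro a ((rfl | rfl) | (rfl | rfl)) <;> exact ⟨_, by simp only [mem_Iio]; omega, rfl⟩
    · obtain ⟨t, rfl⟩ := Nat.exists_eq_add_of_le hk'
      set H := wcPlay (waiterStrategy (l + 1) L) cl (2 ^ l - 1)
      obtain ⟨hlegal, hpool⟩ :=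
        ih (redLeaf L H) (injOn_redLeaf H hL) (fun h => cl (H ++ h)) (k := t) (by omega)
      rw [wcPlay_waiterStrategy_succ, waiterStrategy_succ_append l L (length_wcPlay _ _ _)]
      have fresh : ∀ e : Sym2 (Fin n), (∀ a ∈ e, a ∈ redLeaf L H '' Iio (2 ^ l - 1)) →
          e ∉ wcClaimed H := fun e he hc =>
        apply_zero_notMem_redLeaf_image H hL
          (he _ (apply_zero_mem_of_mem_wcClaimed_waiterStrategy l L cl hc))
      exact ⟨hlegal.append_left (fresh _ fun a ha => hpool a (.inl ha))
          (fresh _ fun a ha => hpool a (.inr ha)),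
        fun a ha => redLeaf_image_subset H (hpool a ha)⟩

theorem waiterStrategy_clique (l : ℕ) (L : ℕ → Fin n) (hL : InjOn L (Iio (2 ^ (l + 1) - 1)))
    (cl : WCHist n → Bool) :
    ∃ w : Fin (l + 1) → Fin n, Injective w ∧ w 0 = L 0 ∧
      (∀ i, w i ∈ L '' Iio (2 ^ (l + 1) - 1)) ∧
      Pairwise (fun i j =>
        s(w i, w j) ∈ wcRed (wcPlay (waiterStrategy (l + 1) L) cl (waiterRounds (l + 1)))) ∧
      ∀ e ∈ wcClaimed (wcPlay (waiterStrategy (l + 1) L) cl (waiterRounds (l + 1))),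
        ∃ i, w i ∈ e := by
  induction l generalizing L cl with
  | zero =>
    refine ⟨fun _ => L 0, fun i j _ => Fin.subsingleton_one.elim i j, rfl,
      fun _ => ⟨0, by simp, rfl⟩, fun i j hij => (hij (Fin.subsingleton_one.elim i j)).elim,
      ?_⟩
    simp [waiterRounds, wcPlay, wcClaimed]
  | succ l ih =>
    set H := wcPlay (waiterStrategy (l + 2) L) cl (2 ^ (l + 1) - 1)
    rw [two_pow_succ_sub_one] at hL ⊢
    obtain ⟨w, hw_inj, -, hw_mem, hw_red, hw_cover⟩ :=
      ih (redLeaf L H) (injOn_redLeaf H hL) (fun h => cl (H ++ h))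
    rw [waiterRounds_succ, wcPlay_waiterStrategy_succ, wcRed_append, wcClaimed_append]
    refine ⟨Fin.cons (L 0) w, ?_, rfl, ?_, ?_, ?_⟩
    · exact Fin.cons_injective_iff.2
        ⟨fun ⟨i, hi⟩ => apply_zero_notMem_redLeaf_image H hL (hi ▸ hw_mem i), hw_inj⟩
    · refine Fin.cases ⟨0, by simp, rfl⟩ fun i => ?_
      simpa using redLeaf_image_subset H (hw_mem i)
    · have red_zero : ∀ j, s(L 0, w j) ∈ wcRed H := fun j => by
        obtain ⟨k, hk, hkj⟩ := hw_mem j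
        exact hkj ▸ mk_redLeaf_mem_wcRed_waiterStrategy (l + 1) L cl hk
      refine pairwise_fin_succ_iff.2 ⟨fun i => ?_, fun j => ?_, fun i j hij => ?_⟩
      · simpa [Sym2.eq_swap] using Or.inl (red_zero i)
      · simpa using .inl (red_zero j)
      · simpa using .inr (hw_red hij)
    · rintro e (he | he)
      · exact ⟨0, apply_zero_mem_of_mem_wcClaimed_waiterStrategy (l + 1) L cl he⟩
      · obtain ⟨i, hi⟩ := hw_cover e he
        exact ⟨i.succ, hi⟩

lemma Finset.exists_injOn_Iio_card {α : Type*} (S : Finset α) {a : α} (ha : a ∈ S) :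
    ∃ f : ℕ → α, f 0 = a ∧ InjOn f (Set.Iio S.card) ∧ MapsTo f (Set.Iio S.card) S := by
  classical
  set l := a :: (S.erase a).toList
  have hlen : l.length = S.card := by
    simp [l, Finset.card_erase_of_mem ha, Nat.sub_add_cancel (Finset.card_pos.2 ⟨a, ha⟩)]
  have hl_sub : ∀ x ∈ l, x ∈ S := by
    simp [l, ha]
  have hnd : l.Nodup := List.nodup_cons.2 ⟨by simp, Finset.nodup_toList _⟩
  refine ⟨fun k => l.getD k a, rfl, fun i hi j hj hij => ?_, fun i hi => ?_⟩
  · rw [Set.mem_Iio, ← hlen] at hi hj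
    simp only [List.getD_eq_getElem _ _ hi, List.getD_eq_getElem _ _ hj] at hij
    exact hnd.getElem_inj_iff.1 hij
  · rw [Set.mem_Iio, ← hlen] at hi
    simp only [List.getD_eq_getElem _ _ hi]
    exact hl_sub _ (List.getElem_mem hi)

/-- For every `l ≥ 2`, any set `S` of `2^l - 1` vertices of an initially
empty board and any prescribed `v1 ∈ S`, Waiter has a strategy which, against any Client,
within at most `2^l` legally played rounds forces a red clique on `l` vertices
`w_1, ..., w_l ⊆ S` with `w_1 = v1`, such that every claimed edge (red or blue) has at
least one endpoint among the `w_i`. -/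
theorem stmt_7 (n l : ℕ) (hl : 2 ≤ l) (S : Finset (Fin n)) (hS : S.card = 2 ^ l - 1)
    (v1 : Fin n) (hv1 : v1 ∈ S) :
    ∃ ws : WCHist n → Sym2 (Fin n) × Sym2 (Fin n),
      ∀ cl : WCHist n → Bool, ∃ r ≤ 2 ^ l,
        (∀ r' < r,
          (ws (wcPlay ws cl r')).1 ≠ (ws (wcPlay ws cl r')).2 ∧
          ¬ (ws (wcPlay ws cl r')).1.IsDiag ∧ ¬ (ws (wcPlay ws cl r')).2.IsDiag ∧
          (ws (wcPlay ws cl r')).1 ∉ wcClaimed (wcPlay ws cl r') ∧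
          (ws (wcPlay ws cl r')).2 ∉ wcClaimed (wcPlay ws cl r')) ∧
        ∃ w : Fin l → Fin n, Function.Injective w ∧ w ⟨0, by omega⟩ = v1 ∧
          (∀ i, w i ∈ S) ∧
          (∀ i j : Fin l, i ≠ j → s(w i, w j) ∈ wcRed (wcPlay ws cl r)) ∧
          (∀ e ∈ wcClaimed (wcPlay ws cl r), ∃ i, w i ∈ e) := by
  obtain ⟨l, rfl⟩ : ∃ l', l = l' + 1 := ⟨l - 1, by omega⟩
  obtain ⟨L, hL0, hL_inj, hL_maps⟩ := S.exists_injOn_Iio_card hv1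
  rw [hS] at hL_inj hL_maps
  refine ⟨waiterStrategy (l + 1) L, fun cl =>
    ⟨waiterRounds (l + 1), (waiterRounds_lt_two_pow _).le,
      fun r' hr' => (waiterStrategy_legal _ L hL_inj cl hr').1, ?_⟩⟩
  obtain ⟨w, hw_inj, hw0, hw_mem, hw_red, hw_cover⟩ := waiterStrategy_clique l L hL_inj cl
  refine ⟨w, hw_inj, hw0.trans hL0, fun i => ?_, hw_red, hw_cover⟩
  obtain ⟨k, hk, hkw⟩ := hw_mem i
  exact hkw ▸ hL_maps hk
end
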